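/- Let 0 < q < 1, m_l = [2l+1]_q, and α_l = (∑_{n+k=l} m_n m_k / m_l)^{-1/2}. Then sup over l ≥ 1 of max_{|l'-l| ≤ 1} |α_l^{-1} - α_{l'}^{-1}| is finite. -/

import Mathlib

/-!
With `x = q²` the powers of `q` cancel in `m_n m_k / m_{n+k}`, which becomes
`(1 - x^{2n+1})(1 - x^{2k+1}) / ((1 - x)(1 - x^{2(n+k)+1}))`; this lies below `1/(1 - x)` by at
most `(xⁿ + xᵏ)/(1 - x)²`. Summing over `n + k = l` gives `α_l⁻² = (l + 1)/(1 - x) - E_l` with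
`0 ≤ E_l ≤ 2/(1 - x)³`, so neighbouring values of `α_l⁻²` differ by a bounded amount, and
`|√a - √b| ≤ √|a - b|` carries this over to `α_l⁻¹`.
-/

/-- The `q`-number `[a]_q = (qᵃ - q⁻ᵃ)/(q - q⁻¹)`. -/
noncomputable def qnum (q : ℝ) (a : ℕ) : ℝ := (q ^ a - q⁻¹ ^ a) / (q - q⁻¹)

open Finset

lemma abs_sqrt_sub_sqrt_le (a b : ℝ) : |√a - √b| ≤ √|a - b| := by
  wlog hba : b ≤ a generalizing a b
  · rw [abs_sub_comm, abs_sub_comm a]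
    exact this b a (le_of_not_ge hba)
  refine Real.abs_le_sqrt ?_
  rw [abs_of_nonneg (sub_nonneg.2 hba)]
  rcases le_total b 0 with hb | hb
  · rw [Real.sqrt_eq_zero_of_nonpos hb, sub_zero]
    rcases le_total a 0 with ha | ha
    · rw [Real.sqrt_eq_zero_of_nonpos ha]; linarith
    · rw [Real.sq_sqrt ha]; linarith
  · have hsqrt : √b * √b ≤ √a * √b :=
      mul_le_mul_of_nonneg_right (Real.sqrt_le_sqrt hba) (Real.sqrt_nonneg b)
    nlinarith [Real.mul_self_sqrt hb, Real.sq_sqrt (hb.trans hba)]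

lemma qnum_two_mul_add_one {q : ℝ} (hq : q ≠ 0) (hq1 : q ^ 2 ≠ 1) (a : ℕ) :
    qnum q (2 * a + 1) = (1 - (q ^ 2) ^ (2 * a + 1)) / ((q ^ 2) ^ a * (1 - q ^ 2)) := by
  have hsub : q - q⁻¹ ≠ 0 := by
    rw [sub_ne_zero]; intro h
    field_simp at h; exact hq1 h
  have h1 : 1 - q ^ 2 ≠ 0 := sub_ne_zero.2 (Ne.symm hq1)
  rw [qnum, inv_pow, div_eq_div_iff hsub (by positivity)]
  field_simp
  ring

lemma qnum_mul_qnum_div_qnum {q : ℝ} (hq : q ≠ 0) (hq1 : q ^ 2 ≠ 1) (n k : ℕ) :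
    qnum q (2 * n + 1) * qnum q (2 * k + 1) / qnum q (2 * (n + k) + 1) =
      (1 - (q ^ 2) ^ (2 * n + 1)) * (1 - (q ^ 2) ^ (2 * k + 1)) /
        ((1 - q ^ 2) * (1 - (q ^ 2) ^ (2 * (n + k) + 1))) := by
  have h1 : 1 - q ^ 2 ≠ 0 := sub_ne_zero.2 (Ne.symm hq1)
  have h2 : 1 - (q ^ 2) ^ (2 * (n + k) + 1) ≠ 0 := by
    rw [sub_ne_zero, ne_comm, Ne, pow_eq_one_iff_of_nonneg (sq_nonneg q) (by omega)]
    exact hq1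
  simp only [qnum_two_mul_add_one hq hq1]
  field_simp
  ring

lemma inv_one_sub_sub_div_mem_Icc {x : ℝ} (hx0 : 0 ≤ x) (hx1 : x < 1) (n k : ℕ) :
    (1 - x)⁻¹ - (1 - x ^ (2 * n + 1)) * (1 - x ^ (2 * k + 1)) /
        ((1 - x) * (1 - x ^ (2 * (n + k) + 1))) ∈
      Set.Icc 0 ((x ^ n + x ^ k) / (1 - x) ^ 2) := by
  set u := x ^ (2 * n + 1)
  set v := x ^ (2 * k + 1)
  set w := x ^ (2 * (n + k) + 1)
  have hu : u ≤ x ^ n := pow_le_pow_of_le_one hx0 hx1.le (by omega)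
  have hv : v ≤ x ^ k := pow_le_pow_of_le_one hx0 hx1.le (by omega)
  have hwu : w ≤ u := pow_le_pow_of_le_one hx0 hx1.le (by omega)
  have hwx : w ≤ x := pow_le_of_le_one hx0 hx1.le (by omega)
  have hu1 : u ≤ 1 := pow_le_one₀ hx0 hx1.le
  have hv0 : 0 ≤ v := pow_nonneg hx0 _
  have hw0 : 0 ≤ w := pow_nonneg hx0 _
  have h1x : 0 < 1 - x := sub_pos.2 hx1
  have h1w : 0 < 1 - w := by linarith
  have key : (1 - x)⁻¹ - (1 - u) * (1 - v) / ((1 - x) * (1 - w)) =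
      (u + v - u * v - w) / ((1 - x) * (1 - w)) := by
    field_simp
    ring
  rw [key]
  constructor
  · apply div_nonneg _ (by positivity)
    nlinarith [mul_le_mul_of_nonneg_right hu1 hv0]
  · calc (u + v - u * v - w) / ((1 - x) * (1 - w))
        ≤ (x ^ n + x ^ k) / ((1 - x) * (1 - x)) := by
          gcongr
          nlinarith [mul_nonneg (hw0.trans hwu) hv0]
      _ = (x ^ n + x ^ k) / (1 - x) ^ 2 := by ring

noncomputable def alphaInvSq (q : ℝ) (l : ℕ) : ℝ :=
  ∑ n ∈ range (l + 1), qnum q (2 * n + 1) * qnum q (2 * (l - n) + 1) / qnum q (2 * l + 1)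

lemma alphaInvSq_mem_Icc {q : ℝ} (hq : 0 < q) (hq1 : q < 1) (l : ℕ) :
    (l + 1) / (1 - q ^ 2) - alphaInvSq q l ∈ Set.Icc 0 (2 / (1 - q ^ 2) ^ 3) := by
  set x := q ^ 2
  have hx0 : 0 ≤ x := sq_nonneg q
  have hx1 : x < 1 := by nlinarith
  have hq2 : q ^ 2 ≠ 1 := hx1.ne
  have hsplit : ∀ n ∈ range (l + 1), l = n + (l - n) := fun n hn => by
    have := mem_range.1 hn; omega
  have hdiff : (l + 1) / (1 - x) - alphaInvSq q l = ∑ n ∈ range (l + 1),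
      ((1 - x)⁻¹ - (1 - x ^ (2 * n + 1)) * (1 - x ^ (2 * (l - n) + 1)) /
        ((1 - x) * (1 - x ^ (2 * (n + (l - n)) + 1)))) := by
    rw [sum_sub_distrib, sum_const, card_range, nsmul_eq_mul, alphaInvSq, div_eq_mul_inv]
    push_cast
    congr 1
    refine sum_congr rfl fun n hn => ?_
    rw [← qnum_mul_qnum_div_qnum hq.ne' hq2, ← hsplit n hn]
  have hbound := fun n (_ : n ∈ range (l + 1)) =>
    inv_one_sub_sub_div_mem_Icc hx0 hx1 n (l - n)
  rw [hdiff]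
  refine ⟨sum_nonneg fun n hn => (hbound n hn).1, ?_⟩
  calc _ ≤ ∑ n ∈ range (l + 1), (x ^ n + x ^ (l - n)) / (1 - x) ^ 2 :=
        sum_le_sum fun n hn => (hbound n hn).2
    _ = (∑ n ∈ range (l + 1), x ^ n + ∑ n ∈ range (l + 1), x ^ n) / (1 - x) ^ 2 := by
        rw [← sum_div, sum_add_distrib]
        congr 2
        simpa using sum_range_reflect (fun n => x ^ n) (l + 1)
    _ ≤ ((1 - x)⁻¹ + (1 - x)⁻¹) / (1 - x) ^ 2 := by
        have hgeom : ∑ n ∈ range (l + 1), x ^ n ≤ (1 - x)⁻¹ := by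
          simpa [← range_eq_Ico] using geom_sum_Ico_le_of_lt_one (m := 0) (n := l + 1) hx0 hx1
        gcongr
    _ = 2 / (1 - x) ^ 3 := by
        field_simp
        ring

lemma abs_alphaInvSq_sub_le {q : ℝ} (hq : 0 < q) (hq1 : q < 1) {l l' : ℕ}
    (hl : l ≤ l' + 1) (hl' : l' ≤ l + 1) :
    |alphaInvSq q l - alphaInvSq q l'| ≤ 1 / (1 - q ^ 2) + 2 / (1 - q ^ 2) ^ 3 := by
  have h1q : 0 < 1 - q ^ 2 := by nlinarith
  have hshift : ∀ {a b : ℕ}, a ≤ b + 1 →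
      ((a : ℝ) + 1) / (1 - q ^ 2) ≤ (b + 1) / (1 - q ^ 2) + 1 / (1 - q ^ 2) := by
    intro a b hab
    rw [← add_div]
    gcongr
    exact_mod_cast hab
  obtain ⟨hl0, hl1⟩ := alphaInvSq_mem_Icc hq hq1 l
  obtain ⟨hl'0, hl'1⟩ := alphaInvSq_mem_Icc hq hq1 l'
  rw [abs_le]
  constructor <;> linarith [hshift hl, hshift hl']

/-- With `m_l = [2l+1]_q` and `α_l = (∑_{n+k=l} m_n m_k/m_l)^{-1/2}` (so that
`α_l⁻¹ = √(∑_{n+k=l} m_n m_k/m_l)`), the supremum over `l ≥ 1` of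
`max_{|l'-l| ≤ 1} |α_l⁻¹ - α_{l'}⁻¹|` is finite. -/
theorem stmt9 (q : ℝ) (hq : 0 < q) (hq1 : q < 1) :
    ∃ S : ℝ, ∀ l l' : ℕ, 1 ≤ l → l' ≤ l + 1 → l ≤ l' + 1 →
      |Real.sqrt (∑ n ∈ Finset.range (l + 1),
          qnum q (2 * n + 1) * qnum q (2 * (l - n) + 1) / qnum q (2 * l + 1)) -
        Real.sqrt (∑ n ∈ Finset.range (l' + 1),
          qnum q (2 * n + 1) * qnum q (2 * (l' - n) + 1) / qnum q (2 * l' + 1))| ≤ S :=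
  ⟨√(1 / (1 - q ^ 2) + 2 / (1 - q ^ 2) ^ 3), fun l l' _ hl' hl =>
    (abs_sqrt_sub_sqrt_le (alphaInvSq q l) (alphaInvSq q l')).trans
      (Real.sqrt_le_sqrt (abs_alphaInvSq_sub_le hq hq1 hl hl'))⟩
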